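/- arXiv:1706.07456 — 2 statements merged into one kernel-verified Lean document; each statement's English description precedes it below -/
import Mathlib

section
/- Let a, b, a', b' ∈ ℂ satisfy |a| > |b| and |a'| > |b'|. Then the following are equivalent: (1) there exist nonzero complex numbers c₀, c₁ and maps ψ₀, ψ₁ : ℂ → ℂ with either ψⱼ(z) = cⱼ·z for both j = 0, 1, or ψⱼ(z) = cⱼ·conj(z) for both j = 0, 1, such that for every z ∈ ℂ: a'·ψ₁(z) + b'·conj(ψ₁(z)) = ψ₀(a·z + b·conj(z)); (2) |b/a| = |b'/a'|. -/
/-!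
Writing `ψ₁ z = c₁ z` (or `c₁ z̄`), both sides of the orbit equation are of the form
`p z + q z̄`, and such a map determines `p` and `q`. So the equation says
`a' c₁ = c₀ a` and `b' c̄₁ = c₀ b` (with `a, b` conjugated and swapped in the antilinear case),
and taking norms gives `|b/a| = |b'/a'|`. Conversely, if `|b' a| = |a' b|` then the unit
`c₁ = exp(iθ)`, with `θ` half the difference of the arguments of `b' a` and `a' b`,
solves `(b' a) c̄₁ = (a' b) c₁`, and `c₀ = a' c₁ / a` completes the pair.
-/

open ComplexConjugate

namespace Complex

theorem forall_mul_add_mul_conj_eq_iff {p q r s : ℂ} :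
    (∀ z, p * z + q * conj z = r * z + s * conj z) ↔ p = r ∧ q = s := by
  refine ⟨fun h => ?_, fun ⟨hpr, hqs⟩ z => by rw [hpr, hqs]⟩
  have h1 := h 1
  have hI := h I
  simp only [mul_one, map_one, conj_I] at h1 hI
  have hpr : p = r := by
    linear_combination (h1 - I * hI) / 2 + (p - r - q + s) / 2 * I_mul_I
  exact ⟨hpr, by linear_combination h1 - hpr⟩

theorem norm_div_eq_of_mul_eq_of_mul_conj_eq {x y x' y' c₀ c₁ : ℂ} (hc₀ : c₀ ≠ 0)
    (hc₁ : c₁ ≠ 0) (hx : x' * c₁ = c₀ * x) (hy : y' * conj c₁ = c₀ * y) :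
    ‖y / x‖ = ‖y' / x'‖ := by
  have hc₁' : ‖c₁‖ ≠ 0 := norm_ne_zero_iff.mpr hc₁
  calc ‖y / x‖ = ‖(c₀ * y) / (c₀ * x)‖ := by rw [mul_div_mul_left _ _ hc₀]
    _ = ‖y'‖ * ‖c₁‖ / (‖x'‖ * ‖c₁‖) := by
      rw [← hx, ← hy, norm_div, norm_mul, norm_mul, norm_conj]
    _ = ‖y' / x'‖ := by rw [mul_div_mul_right _ _ hc₁', norm_div]

theorem exists_norm_eq_one_mul_conj_eq_mul {w w' : ℂ} (h : ‖w‖ = ‖w'‖) :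
    ∃ c : ℂ, ‖c‖ = 1 ∧ w * conj c = w' * c := by
  set θ : ℝ := (arg w - arg w') / 2
  refine ⟨exp (θ * I), norm_exp_ofReal_mul_I θ, ?_⟩
  rw [← exp_conj, map_mul, conj_ofReal, conj_I]
  conv_lhs => rw [← norm_mul_exp_arg_mul_I w]
  conv_rhs => rw [← norm_mul_exp_arg_mul_I w']
  rw [h, mul_assoc, mul_assoc, ← exp_add, ← exp_add]
  congr 2
  simp only [θ]
  push_cast
  ring

theorem exists_mul_eq_and_mul_conj_eq_of_norm_div_eq {a b a' b' : ℂ} (ha : a ≠ 0) (ha' : a' ≠ 0)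
    (h : ‖b / a‖ = ‖b' / a'‖) :
    ∃ c₀ c₁ : ℂ, c₀ ≠ 0 ∧ c₁ ≠ 0 ∧ a' * c₁ = c₀ * a ∧ b' * conj c₁ = c₀ * b := by
  have hnorm : ‖b' * a‖ = ‖a' * b‖ := by
    rw [norm_div, norm_div, div_eq_div_iff (norm_ne_zero_iff.mpr ha)
      (norm_ne_zero_iff.mpr ha')] at h
    rw [norm_mul, norm_mul, ← h, mul_comm]
  obtain ⟨c, hc, hconj⟩ := exists_norm_eq_one_mul_conj_eq_mul hnorm
  have hc0 : c ≠ 0 := norm_ne_zero_iff.mp (hc ▸ one_ne_zero)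
  refine ⟨a' * c / a, c, div_ne_zero (mul_ne_zero ha' hc0) ha, hc0, by field_simp, ?_⟩
  field_simp
  linear_combination hconj

end Complex

open Complex

/-- The `n = 2` case of the classification of orbits of orientation-preserving
`1`-jets under the left-right action of liftable `1`-jets: `a·z + b·conj z` and
`a'·z + b'·conj z` (with `|a| > |b|`, `|a'| > |b'|`) lie in the same orbit if and
only if `|b/a| = |b'/a'|`. -/
theorem statement6 (a b a' b' : ℂ)
    (hab : ‖b‖ < ‖a‖)
    (hab' : ‖b'‖ < ‖a'‖) :
    (∃ (c₀ c₁ : ℂ) (ψ₀ ψ₁ : ℂ → ℂ), c₀ ≠ 0 ∧ c₁ ≠ 0 ∧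
        (((∀ z, ψ₀ z = c₀ * z) ∧ (∀ z, ψ₁ z = c₁ * z)) ∨
         ((∀ z, ψ₀ z = c₀ * (starRingEnd ℂ) z) ∧
          (∀ z, ψ₁ z = c₁ * (starRingEnd ℂ) z))) ∧
        ∀ z : ℂ, a' * ψ₁ z + b' * (starRingEnd ℂ) (ψ₁ z) =
          ψ₀ (a * z + b * (starRingEnd ℂ) z)) ↔
    ‖b / a‖ = ‖b' / a'‖ := by
  have ha : a ≠ 0 := norm_pos_iff.mp ((norm_nonneg b).trans_lt hab)
  have ha' : a' ≠ 0 := norm_pos_iff.mp ((norm_nonneg b').trans_lt hab')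
  constructor
  · rintro ⟨c₀, c₁, ψ₀, ψ₁, hc₀, hc₁, ⟨h₀, h₁⟩ | ⟨h₀, h₁⟩, heq⟩
    · obtain ⟨hx, hy⟩ := (forall_mul_add_mul_conj_eq_iff (p := a' * c₁) (q := b' * conj c₁)
        (r := c₀ * a) (s := c₀ * b)).mp fun z => by
        have := heq z
        rw [h₀, h₁, map_mul] at this
        linear_combination this
      exact norm_div_eq_of_mul_eq_of_mul_conj_eq hc₀ hc₁ hx hy
    · obtain ⟨hy, hx⟩ := (forall_mul_add_mul_conj_eq_iff (p := b' * conj c₁) (q := a' * c₁)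
        (r := c₀ * conj b) (s := c₀ * conj a)).mp fun z => by
        have := heq z
        simp only [h₀, h₁, map_mul, map_add, conj_conj] at this
        linear_combination this
      rw [← norm_div_eq_of_mul_eq_of_mul_conj_eq hc₀ hc₁ hx hy, ← map_div₀, norm_conj]
  · intro h
    obtain ⟨c₀, c₁, hc₀, hc₁, hx, hy⟩ := exists_mul_eq_and_mul_conj_eq_of_norm_div_eq ha ha' h
    refine ⟨c₀, c₁, fun z => c₀ * z, fun z => c₁ * z, hc₀, hc₁,
      .inl ⟨fun _ => rfl, fun _ => rfl⟩, fun z => ?_⟩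
    have := (forall_mul_add_mul_conj_eq_iff (p := a' * c₁) (q := b' * conj c₁)
      (r := c₀ * a) (s := c₀ * b)).mpr ⟨hx, hy⟩ z
    rw [map_mul]
    linear_combination this
end

section
/- Let φ : ℂ → ℂ be C^∞-smooth on a neighborhood of 0 with φ(0) = 0 and invertible real Fréchet derivative at 0. Then there exist maps φ̃ : ℂ → ℂ and h : ℂ → ℂ, both C^∞-smooth on a neighborhood of 0, with φ̃(0) = 0, φ̃ having invertible real Fréchet derivative at 0, h(0) ≠ 0, such that Im(φ̃(w)) = Im(w) for all w in a neighborhood of 0 and φ(z) = φ̃(z·h(z)) for all z in a neighborhood of 0. -/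
/-!
Write `g = Im ∘ φ`, so `g 0 = 0`. By Hadamard's lemma `g z = L_z z` with `L_z = ∫₀¹ dg(t z) dt`
depending smoothly on `z`, and every real functional `L` on `ℂ` is `z ↦ Im (z * w)` for a unique
`w`. This yields a smooth `h` with `Im (z * h z) = Im (φ z)`, and `h 0 ≠ 0` because
`dg(0) = Im ∘ dφ(0) ≠ 0`. Hence `ψ z = z * h z` is a local diffeomorphism, and `φ̃ = φ ∘ ψ⁻¹`
satisfies `Im (φ̃ w) = Im (ψ (ψ⁻¹ w)) = Im w`.
-/

open Complex Filter Topology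
open Set Metric MeasureTheory
open scoped ContDiff

section

variable {E F : Type*} [NormedAddCommGroup E] [NormedSpace ℝ E]
  [NormedAddCommGroup F] [NormedSpace ℝ F]

theorem ContDiffAt.exists_contDiff_eventuallyEq [HasContDiffBump E] {n : ℕ} {f : E → F} {x : E}
    (hf : ContDiffAt ℝ n f x) : ∃ g : E → F, ContDiff ℝ n g ∧ g =ᶠ[𝓝 x] f := by
  obtain ⟨u, hu, hfu⟩ := hf.contDiffOn le_rfl (by simp)
  obtain ⟨r, hr, hball⟩ := Metric.mem_nhds_iff.1 hu
  let χ : ContDiffBump x := ⟨r / 3, r / 2, by positivity, by linarith⟩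
  refine ⟨fun y => χ y • f y, contDiff_iff_contDiffAt.2 fun y => ?_, ?_⟩
  · by_cases hy : y ∈ ball x r
    · exact χ.contDiff.contDiffAt.smul ((hfu.mono hball).contDiffAt (isOpen_ball.mem_nhds hy))
    · have hχ : y ∉ tsupport χ := by
        rw [χ.tsupport_eq]
        exact fun hy' => hy (closedBall_subset_ball (by change r / 2 < r; linarith) hy')
      refine (contDiffAt_const (c := (0 : F))).congr_of_eventuallyEq ?_
      filter_upwards [notMem_tsupport_iff_eventuallyEq.1 hχ] with z hz
      simp [hz]
  · filter_upwards [ball_mem_nhds x (by positivity : 0 < r / 3)] with y hy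
    simp [χ.one_of_mem_closedBall (ball_subset_closedBall hy)]

theorem ContDiff.intervalIntegral_comp_smul [CompleteSpace F] {n : ℕ∞} {u : E → F}
    (hu : ContDiff ℝ n u) : ContDiff ℝ n fun z => ∫ t in (0 : ℝ)..1, u (t • z) := by
  -- `∫ t in 0..1, u (t • z)` is the convolution at `0` of `1_(0,1]` with `s ↦ χ s • u (-s • z)`,
  -- where the bump `χ` equals `1` on `[-1, 0]`.
  let χ : ContDiffBump (-(1 / 2) : ℝ) := ⟨1 / 2, 1, by norm_num, by norm_num⟩
  let g : E → ℝ → F := fun z s => χ s • u ((-s) • z)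
  let f : ℝ → ℝ := (Ioc (0 : ℝ) 1).indicator fun _ => 1
  have hf : LocallyIntegrable f := ((integrable_indicator_iff measurableSet_Ioc).2
    (integrableOn_const (by simp [Real.volume_Ioc]))).locallyIntegrable
  have hg : ContDiff ℝ n (Function.uncurry g) :=
    (χ.contDiff.comp contDiff_snd).smul (hu.comp (contDiff_snd.neg.smul contDiff_fst))
  have hconv := contDiffOn_convolution_right_with_param (μ := volume) (g := g) (n := n)
    (ContinuousLinearMap.lsmul ℝ ℝ) isOpen_univ (isCompact_closedBall (-(1 / 2)) 1)
    (fun z s _ hs => by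
      simp [g, χ.zero_of_le_dist (le_of_lt (by rwa [mem_closedBall, not_le] at hs))])
    hf hg.contDiffOn
  have hsmooth :
      ContDiff ℝ n fun z => convolution f (g z) (ContinuousLinearMap.lsmul ℝ ℝ) volume 0 :=
    contDiffOn_univ.1 <| hconv.comp (contDiff_id.prodMk contDiff_const).contDiffOn
      (fun _ _ => by simp)
  convert hsmooth using 2 with z
  rw [convolution_def, intervalIntegral.integral_of_le zero_le_one,
    ← integral_indicator measurableSet_Ioc]
  congr 1
  ext t
  by_cases ht : t ∈ Ioc (0 : ℝ) 1
  · have hχ : χ (-t) = 1 := χ.one_of_mem_closedBall <| by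
      rw [Real.closedBall_eq_Icc]; constructor <;> norm_num <;> linarith [ht.1, ht.2]
    simp [f, g, ht, hχ]
  · simp [f, ht]

noncomputable def hadamardCoeff (g : E → F) (z : E) : E →L[ℝ] F :=
  ∫ t in (0 : ℝ)..1, fderiv ℝ g (t • z)

theorem hadamardCoeff_zero [CompleteSpace F] (g : E → F) : hadamardCoeff g 0 = fderiv ℝ g 0 := by
  simp [hadamardCoeff]

theorem smul_mem_ball_zero {r : ℝ} {z : E} (hz : z ∈ ball (0 : E) r) {t : ℝ}
    (ht : t ∈ uIcc (0 : ℝ) 1) : t • z ∈ ball (0 : E) r :=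
  (convex_ball 0 r).smul_mem_of_zero_mem (mem_ball_self (pos_of_mem_ball hz)) hz
    (uIcc_of_le (zero_le_one' ℝ) ▸ ht)

theorem Filter.EventuallyEq.hadamardCoeff {g₁ g₂ : E → F} (h : g₁ =ᶠ[𝓝 0] g₂) :
    hadamardCoeff g₁ =ᶠ[𝓝 0] hadamardCoeff g₂ := by
  obtain ⟨r, hr, hsub⟩ := Metric.mem_nhds_iff.1 h
  filter_upwards [ball_mem_nhds 0 hr] with z hz
  refine intervalIntegral.integral_congr fun t ht => ?_
  exact (eventuallyEq_of_mem (isOpen_ball.mem_nhds (smul_mem_ball_zero hz ht)) hsub).fderiv_eq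

theorem contDiffAt_hadamardCoeff [CompleteSpace F] [HasContDiffBump E] {g : E → F}
    (hg : ContDiffAt ℝ ∞ g 0) : ContDiffAt ℝ ∞ (hadamardCoeff g) 0 := by
  refine contDiffAt_infty.2 fun n => ?_
  obtain ⟨G, hG, hGg⟩ :=
    (hg.of_le (m := ((n + 1 : ℕ) : ℕ∞)) (by exact_mod_cast le_top)).exists_contDiff_eventuallyEq
  have : ContDiff ℝ n (hadamardCoeff G) :=
    (hG.fderiv_right (by norm_cast)).intervalIntegral_comp_smul
  exact this.contDiffAt.congr_of_eventuallyEq hGg.symm.hadamardCoeff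

theorem eventually_eq_hadamardCoeff_apply [CompleteSpace F] {g : E → F} (hg : ContDiffAt ℝ 1 g 0)
    (hg0 : g 0 = 0) : ∀ᶠ z in 𝓝 0, g z = hadamardCoeff g z z := by
  obtain ⟨r, hr, hC1⟩ := Metric.eventually_nhds_iff_ball.1 (hg.eventually (by simp))
  have hcont : ContinuousOn (fderiv ℝ g) (ball 0 r) :=
    ContDiffOn.continuousOn_fderiv_of_isOpen (fun y hy => (hC1 y hy).contDiffWithinAt)
      isOpen_ball le_rfl
  filter_upwards [ball_mem_nhds 0 hr] with z hz
  have hsegment : ContinuousOn (fun t : ℝ => fderiv ℝ g (t • z)) (uIcc 0 1) :=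
    hcont.comp (by fun_prop) fun t ht => smul_mem_ball_zero hz ht
  have hderiv (t : ℝ) (ht : t ∈ uIcc 0 1) :
      HasDerivAt (fun t : ℝ => g (t • z)) (fderiv ℝ g (t • z) z) t := by
    simpa [Function.comp_def] using
      ((hC1 _ (smul_mem_ball_zero hz ht)).differentiableAt one_ne_zero).hasFDerivAt
        |>.comp_hasDerivAt t ((hasDerivAt_id t).smul_const z)
  rw [hadamardCoeff, ContinuousLinearMap.intervalIntegral_apply hsegment.intervalIntegrable,
    intervalIntegral.integral_eq_sub_of_hasDerivAt hderiv
      (hsegment.clm_apply continuousOn_const).intervalIntegrable]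
  simp [hg0]

end

theorem ContDiffAt.exists_localInverse {𝕜 E : Type*} [RCLike 𝕜] [NormedAddCommGroup E]
    [NormedSpace 𝕜 E] [CompleteSpace E] {n : WithTop ℕ∞} {ψ : E → E} {a : E}
    (hψ : ContDiffAt 𝕜 n ψ a) (hn : n ≠ 0) (hψ' : IsUnit (fderiv 𝕜 ψ a)) :
    ∃ χ : E → E, ContDiffAt 𝕜 n χ (ψ a) ∧ χ (ψ a) = a ∧ IsUnit (fderiv 𝕜 χ (ψ a)) ∧
      (∀ᶠ z in 𝓝 a, χ (ψ z) = z) ∧ ∀ᶠ w in 𝓝 (ψ a), ψ (χ w) = w := by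
  obtain ⟨u, hu⟩ := hψ'
  let e := ContinuousLinearEquiv.unitsEquiv 𝕜 E u
  have he : HasFDerivAt ψ (e : E →L[𝕜] E) a := by
    convert (hψ.differentiableAt hn).hasFDerivAt
    ext; simp [e, hu]
  have hstrict := hψ.hasStrictFDerivAt' he hn
  refine ⟨hψ.localInverse he hn, hψ.to_localInverse he hn, hψ.localInverse_apply_image he hn,
    ?_, hstrict.eventually_left_inverse, hstrict.eventually_right_inverse⟩
  have hχ' : HasFDerivAt (hψ.localInverse he hn) (e.symm : E →L[𝕜] E) (ψ a) :=
    hstrict.to_localInverse.hasFDerivAt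
  rw [hχ'.fderiv]
  exact ⟨(ContinuousLinearEquiv.unitsEquiv 𝕜 E).symm e.symm, rfl⟩

noncomputable def imDual : (ℂ →L[ℝ] ℝ) →L[ℝ] ℂ :=
  (ContinuousLinearMap.apply ℝ ℝ I).smulRight 1 + (ContinuousLinearMap.apply ℝ ℝ 1).smulRight I

theorem im_mul_imDual (L : ℂ →L[ℝ] ℝ) (z : ℂ) : (z * imDual L).im = L z := by
  have hz : z = z.re • (1 : ℂ) + z.im • I := by apply Complex.ext <;> simp
  conv_rhs => rw [hz, map_add, map_smul, map_smul]
  simp [imDual, mul_comm]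

theorem imDual_ne_zero {L : ℂ →L[ℝ] ℝ} (hL : L ≠ 0) : imDual L ≠ 0 := by
  refine fun h => hL (ContinuousLinearMap.ext fun z => ?_)
  simpa [h] using (im_mul_imDual L z).symm

theorem imCLM_comp_ne_zero_of_isUnit {L : ℂ →L[ℝ] ℂ} (hL : IsUnit L) : imCLM.comp L ≠ 0 := by
  obtain ⟨u, rfl⟩ := hL
  intro h
  have hI : (u : ℂ →L[ℝ] ℂ) ((↑u⁻¹ : ℂ →L[ℝ] ℂ) I) = I := by
    rw [← mul_apply_eq_comp, u.mul_inv, one_apply_eq_self]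
  simpa [hI] using DFunLike.congr_fun h ((↑u⁻¹ : ℂ →L[ℝ] ℂ) I)

theorem isUnit_fderiv_id_mul_at_zero {𝔸 : Type*} [NormedField 𝔸] [NormedAlgebra ℝ 𝔸]
    {h : 𝔸 → 𝔸} (hh : DifferentiableAt ℝ h 0) (h0 : h 0 ≠ 0) :
    IsUnit (fderiv ℝ (fun z => z * h z) 0) := by
  have hderiv : HasFDerivAt (fun z => z * h z) (h 0 • ContinuousLinearMap.id ℝ 𝔸) 0 :=
    ((hasFDerivAt_id (0 : 𝔸)).mul hh.hasFDerivAt).congr_fderiv (by simp)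
  rw [hderiv.fderiv]
  exact ⟨⟨_, (h 0)⁻¹ • ContinuousLinearMap.id ℝ 𝔸, by ext; simp [h0], by ext; simp [h0]⟩, rfl⟩

theorem exists_im_mul_eq_im {φ : ℂ → ℂ} (hφ : ContDiffAt ℝ ∞ φ 0) (hφ0 : φ 0 = 0)
    (hD : IsUnit (fderiv ℝ φ 0)) :
    ∃ h : ℂ → ℂ, ContDiffAt ℝ ∞ h 0 ∧ h 0 ≠ 0 ∧ ∀ᶠ z in 𝓝 0, (z * h z).im = (φ z).im := by
  have him : ContDiffAt ℝ ∞ (fun w => (φ w).im) 0 := imCLM.contDiff.contDiffAt.comp 0 hφ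
  have him' : HasFDerivAt (fun w => (φ w).im) (imCLM.comp (fderiv ℝ φ 0)) 0 :=
    imCLM.hasFDerivAt.comp 0 (hφ.differentiableAt (by simp)).hasFDerivAt
  refine ⟨fun z => imDual (hadamardCoeff (fun w => (φ w).im) z),
    imDual.contDiff.contDiffAt.comp 0 (contDiffAt_hadamardCoeff him), ?_, ?_⟩
  · beta_reduce
    rw [hadamardCoeff_zero, him'.fderiv]
    exact imDual_ne_zero (imCLM_comp_ne_zero_of_isUnit hD)
  · filter_upwards [eventually_eq_hadamardCoeff_apply (him.of_le (by simp)) (by simp [hφ0])]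
      with z hz
    rw [im_mul_imDual, ← hz]

/-- Every local diffeomorphism germ `φ` of `(ℂ, 0)` factors as `φ = φ̃ ∘ ψ`, where
`ψ z = z·h z` (with `h` smooth near `0`, `h 0 ≠ 0`) is an orientation-preserving
liftable germ and `φ̃` is a local diffeomorphism germ preserving the imaginary
part. -/
theorem statement8 (φ : ℂ → ℂ) (hφ : ContDiffAt ℝ (⊤ : ℕ∞) φ 0) (hφ0 : φ 0 = 0)
    (hD : IsUnit (fderiv ℝ φ 0)) :
    ∃ φt h : ℂ → ℂ,
      ContDiffAt ℝ (⊤ : ℕ∞) φt 0 ∧ ContDiffAt ℝ (⊤ : ℕ∞) h 0 ∧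
      φt 0 = 0 ∧ IsUnit (fderiv ℝ φt 0) ∧ h 0 ≠ 0 ∧
      (∀ᶠ w in 𝓝 0, (φt w).im = w.im) ∧
      (∀ᶠ z in 𝓝 0, φ z = φt (z * h z)) := by
  obtain ⟨h, hh, hh0, hIm⟩ := exists_im_mul_eq_im hφ hφ0 hD
  have hψ : ContDiffAt ℝ ∞ (fun z => z * h z) 0 := contDiffAt_id.mul hh
  obtain ⟨χ, hχ, hχ0, hχD, hleft, hright⟩ := hψ.exists_localInverse (by simp)
    (isUnit_fderiv_id_mul_at_zero (hh.differentiableAt (by simp)) hh0)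
  simp only [zero_mul] at hχ hχ0 hχD hright
  have hφχ : ContDiffAt ℝ ∞ φ (χ 0) := by rwa [hχ0]
  have hχlim : Tendsto χ (𝓝 0) (𝓝 0) := by simpa [hχ0] using hχ.continuousAt.tendsto
  refine ⟨φ ∘ χ, h, hφχ.comp 0 hχ, hh, by simp [hχ0, hφ0], ?_, hh0, ?_, ?_⟩
  · rw [fderiv_comp 0 (hφχ.differentiableAt (by simp)) (hχ.differentiableAt (by simp)), hχ0]
    exact hD.mul hχD
  · filter_upwards [hright, hχlim.eventually hIm] with w hw hwIm
    rw [Function.comp_apply, ← hwIm, hw]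
  · filter_upwards [hleft] with z hz
    rw [Function.comp_apply, hz]
end
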